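/- Let T > 0, H > 0, let (λ_k)_{k∈ℕ} be real numbers with |λ_k| ≤ C·k^(−(H+1/2)) for all k ≥ 1 and some C > 0, and let (e_k)_{k∈ℕ} be continuous functions ℝ → ℝ that are uniformly bounded (sup_k sup_x |e_k(x)| ≤ M for some M > 0) and uniformly L-Lipschitz (|e_k(x) − e_k(y)| ≤ L·|x − y| for all k, x, y and some L > 0). Let (Z_k)_{k∈ℕ} be a sequence of independent standard Gaussian random variables on a probability space (Ω, ℱ, P), so that almost surely the series Σ_{k=0}^∞ λ_k·e_k(kπt/T)·Z_k converges uniformly on [0,T]. Then there exists A > 0 such that for every integer N ≥ 2, E[ sup_{t∈[0,T]} | Σ_{k=N}^∞ λ_k·e_k(kπt/T)·Z_k | ] ≤ A·N^(−H)·√(log N). -/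

import Mathlib

/-!
Split the tail into the dyadic blocks `[m, 2m)`, `m = 2^j N`. On a block, the sum is at every
`t` a centred Gaussian of variance at most `(C M m^(-H))^2`, and as a function of `t` it is
Lipschitz with random constant `∑ |λ_k| L kπ/T |Z_k|`, of mean `O(m^(3/2 - H))`. Comparing with
its values on a grid of mesh `T/m²` and using the sub-Gaussian maximal inequality for the
`m² + 1` grid values, the expected sup over a block is `O(m^(-H) √(log m))`. Since
`√(log (2^j N)) ≤ (j + 1) √(log N)`, the blocks add up to a multiple of
`N^(-H) √(log N) ∑ (j + 1) 2^(-jH)`.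
-/

open MeasureTheory Real Filter Set ProbabilityTheory Finset
open scoped ENNReal NNReal Topology

namespace ProbabilityTheory

variable {Ω : Type*} {mΩ : MeasurableSpace Ω} {μ : Measure Ω}

lemma HasSubgaussianMGF.mono {X : Ω → ℝ} {c c' : ℝ≥0} (h : HasSubgaussianMGF X c μ)
    (hc : c ≤ c') : HasSubgaussianMGF X c' μ where
  integrable_exp_mul := h.integrable_exp_mul
  mgf_le t := (h.mgf_le t).trans (exp_le_exp.2 (by gcongr))

lemma hasSubgaussianMGF_of_map_eq_gaussianReal {X : Ω → ℝ} {v : ℝ≥0}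
    (hX : μ.map X = gaussianReal 0 v) : HasSubgaussianMGF X v μ := by
  have hXm : AEMeasurable X μ := aemeasurable_of_map_neZero (by rw [hX]; infer_instance)
  rw [← HasSubgaussianMGF.id_map_iff hXm, hX]
  exact ⟨integrable_exp_mul_gaussianReal, fun t => by simp [mgf_id_gaussianReal]⟩

lemma hasSubgaussianMGF_sum_mul_of_iIndepFun {ι : Type*} {Z : ι → Ω → ℝ}
    (hZindep : iIndepFun Z μ) (hZlaw : ∀ k, μ.map (Z k) = gaussianReal 0 1)
    (a : ι → ℝ) (s : Finset ι) :
    HasSubgaussianMGF (fun ω => ∑ k ∈ s, a k * Z k ω)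
      (∑ k ∈ s, (a k ^ 2).toNNReal) μ := by
  refine HasSubgaussianMGF.sum_of_iIndepFun
    (hZindep.comp (fun k x => a k * x) fun k => measurable_const.mul measurable_id)
    fun k _ => ?_
  refine ((hasSubgaussianMGF_of_map_eq_gaussianReal (hZlaw k)).const_mul (a k)).mono
    (le_of_eq ?_)
  rw [Real.toNNReal_of_nonneg (sq_nonneg _)]
  exact mul_one _

lemma HasSubgaussianMGF.integral_exp_add_exp_neg_le [IsFiniteMeasure μ] {X : Ω → ℝ}
    {c : ℝ≥0} (h : HasSubgaussianMGF X c μ) (t : ℝ) :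
    ∫ ω, (exp (t * X ω) + exp (-t * X ω)) ∂μ ≤ 2 * exp (c * t ^ 2 / 2) := by
  rw [integral_add (h.integrable_exp_mul t) (h.integrable_exp_mul (-t))]
  have h1 := h.mgf_le t
  have h2 := h.mgf_le (-t)
  rw [neg_sq] at h2
  unfold mgf at h1 h2
  linarith

lemma abs_le_add_mul_exp_add_exp_neg {β : ℝ} (hβ : 0 < β) (a y : ℝ) :
    |y| ≤ a + exp (-(β * a)) / β * (exp (β * y) + exp (-β * y)) := by
  have hexp : exp (β * |y|) ≤ exp (β * y) + exp (-β * y) := by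
    rcases abs_cases y with ⟨h, -⟩ | ⟨h, -⟩ <;> rw [h]
    · linarith [exp_pos (-β * y)]
    · rw [mul_neg, ← neg_mul]; linarith [exp_pos (β * y)]
  have hlin : β * (|y| - a) ≤ exp (β * |y|) * exp (-(β * a)) := by
    rw [← exp_add]; linarith [add_one_le_exp (β * |y| + -(β * a))]
  have hscaled :
      β * (|y| - a) ≤ β * (exp (-(β * a)) / β * (exp (β * y) + exp (-β * y))) := by
    calc β * (|y| - a) ≤ (exp (β * y) + exp (-β * y)) * exp (-(β * a)) :=
          hlin.trans (by gcongr)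
      _ = _ := by field_simp
  linarith [le_of_mul_le_mul_left hscaled hβ]

theorem integral_sup'_abs_le_add_of_hasSubgaussianMGF [IsProbabilityMeasure μ] {ι : Type*}
    {s : Finset ι} (hs : s.Nonempty) {G : ι → Ω → ℝ} {v : ℝ≥0}
    (hG : ∀ i ∈ s, HasSubgaussianMGF (G i) v μ) {β : ℝ} (hβ : 0 < β) (a : ℝ) :
    ∫ ω, s.sup' hs (fun i => |G i ω|) ∂μ
      ≤ a + exp (-(β * a)) / β * (#s * (2 * exp (v * β ^ 2 / 2))) := by
  set c := exp (-(β * a)) / β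
  set S : Ω → ℝ := fun ω => ∑ i ∈ s, (exp (β * G i ω) + exp (-β * G i ω))
  have hS_int : Integrable S μ :=
    integrable_finsetSum s fun i hi => ((hG i hi).integrable_exp_mul β).add
      ((hG i hi).integrable_exp_mul (-β))
  have hpoint : ∀ ω, s.sup' hs (fun i => |G i ω|) ≤ a + c * S ω := by
    intro ω
    refine sup'_le hs _ fun i hi => (abs_le_add_mul_exp_add_exp_neg hβ a (G i ω)).trans ?_
    gcongr
    exact single_le_sum (f := fun j => exp (β * G j ω) + exp (-β * G j ω))
      (fun j _ => by positivity) hi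
  have hS : ∫ ω, S ω ∂μ ≤ #s * (2 * exp (v * β ^ 2 / 2)) := by
    rw [integral_finsetSum (f := fun i ω => exp (β * G i ω) + exp (-β * G i ω)) s
      fun i hi => ((hG i hi).integrable_exp_mul β).add ((hG i hi).integrable_exp_mul (-β))]
    exact (sum_le_card_nsmul _ _ _ fun i hi =>
      (hG i hi).integral_exp_add_exp_neg_le β).trans_eq (nsmul_eq_mul _ _)
  obtain ⟨i₀, hi₀⟩ := hs
  calc ∫ ω, s.sup' _ (fun i => |G i ω|) ∂μ ≤ ∫ ω, (a + c * S ω) ∂μ :=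
        integral_mono_of_nonneg
          (ae_of_all _ fun ω => (abs_nonneg _).trans (le_sup' (fun i => |G i ω|) hi₀))
          ((integrable_const a).add (hS_int.const_mul c)) (ae_of_all _ hpoint)
    _ = a + c * ∫ ω, S ω ∂μ := by
        rw [integral_add (integrable_const a) (hS_int.const_mul c), integral_const,
          integral_const_mul, probReal_univ, one_smul]
    _ ≤ _ := by gcongr

/-- The choice `β = √(x / v)`, `a = 3x / 2β` in the previous bound. -/
theorem integral_sup'_abs_le_of_hasSubgaussianMGF [IsProbabilityMeasure μ] {ι : Type*}
    {s : Finset ι} (hs : s.Nonempty) {G : ι → Ω → ℝ} {v : ℝ≥0} (hv : 0 < v)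
    (hG : ∀ i ∈ s, HasSubgaussianMGF (G i) v μ) {x : ℝ} (hx : 1 ≤ x)
    (hsx : log (2 * #s) ≤ x) :
    ∫ ω, s.sup' hs (fun i => |G i ω|) ∂μ ≤ 3 * √v * √x := by
  set β := √(x / v)
  have hβ : 0 < β := by positivity
  have hβv : v * β ^ 2 = x := by rw [sq_sqrt (by positivity)]; field_simp
  have hxβ : x / β = √v * √x := by
    rw [← hβv, sqrt_mul v.coe_nonneg, sqrt_sq hβ.le, div_eq_iff hβ.ne']
    linear_combination (-β ^ 2) * mul_self_sqrt v.coe_nonneg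
  have hcard : 2 * (#s : ℝ) ≤ exp x :=
    (log_le_iff_le_exp (by have := hs.card_pos; positivity)).1 hsx
  set a := 3 * x / (2 * β)
  have hβa : β * a = 3 * x / 2 := by simp only [a]; field_simp
  calc ∫ ω, s.sup' hs (fun i => |G i ω|) ∂μ
      ≤ a + exp (-(β * a)) / β * (#s * (2 * exp (v * β ^ 2 / 2))) :=
        integral_sup'_abs_le_add_of_hasSubgaussianMGF hs hG hβ a
    _ = a + 2 * #s * exp (-x) / β := by
        have : exp (-(3 * x / 2)) * exp (x / 2) = exp (-x) := by rw [← exp_add]; ring_nf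
        rw [hβa, hβv, ← this]
        ring
    _ ≤ a + x / β := by
        gcongr
        rw [exp_neg, ← div_eq_mul_inv, div_le_iff₀ (exp_pos x)]
        nlinarith [exp_pos x]
    _ = 5 / 2 * (√v * √x) := by rw [← hxβ]; simp only [a]; field_simp; ring
    _ ≤ 3 * √v * √x := by nlinarith [mul_nonneg (sqrt_nonneg v) (sqrt_nonneg x)]

lemma integral_abs_of_map_eq_gaussianReal {X : Ω → ℝ} (hX : Measurable X)
    (hlaw : μ.map X = gaussianReal 0 1) :
    ∫ ω, |X ω| ∂μ = ∫ y, |y| ∂gaussianReal 0 1 := by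
  rw [← hlaw, integral_map hX.aemeasurable continuous_abs.aestronglyMeasurable]

lemma integral_sum_mul_abs_of_map_eq_gaussianReal {ι : Type*} {Z : ι → Ω → ℝ}
    (hZmeas : ∀ k, Measurable (Z k)) (hZlaw : ∀ k, μ.map (Z k) = gaussianReal 0 1)
    (s : Finset ι) (ℓ : ι → ℝ) :
    ∫ ω, ∑ k ∈ s, ℓ k * |Z k ω| ∂μ
      = (∫ y, |y| ∂gaussianReal 0 1) * ∑ k ∈ s, ℓ k := by
  rw [integral_finsetSum s fun k _ =>
    (hasSubgaussianMGF_of_map_eq_gaussianReal (hZlaw k)).integrable.abs.const_mul _, mul_sum]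
  refine sum_congr rfl fun k _ => ?_
  rw [integral_const_mul, integral_abs_of_map_eq_gaussianReal (hZmeas k) (hZlaw k), mul_comm]

end ProbabilityTheory

lemma MeasureTheory.Integrable.finset_sup' {Ω ι : Type*} {mΩ : MeasurableSpace Ω}
    {μ : Measure Ω} {s : Finset ι} (hs : s.Nonempty) {f : ι → Ω → ℝ}
    (hf : ∀ i ∈ s, Integrable (f i) μ) :
    Integrable (fun ω => s.sup' hs fun i => f i ω) μ := by
  simpa only [← Finset.sup'_apply] using
    Finset.sup'_induction hs f (p := fun g => Integrable g μ) (fun _ hg _ hh => hg.sup hh) hf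

lemma abs_sum_mul_sub_sum_mul_le {ι : Type*} (s : Finset ι) {a : ι → ℝ → ℝ}
    {ℓ : ι → ℝ} (ha : ∀ k ∈ s, ∀ t u, |a k t - a k u| ≤ ℓ k * |t - u|)
    (z : ι → ℝ) (t u : ℝ) :
    |∑ k ∈ s, a k t * z k - ∑ k ∈ s, a k u * z k|
      ≤ (∑ k ∈ s, ℓ k * |z k|) * |t - u| := by
  rw [← sum_sub_distrib, sum_mul]
  refine (abs_sum_le_sum_abs _ _).trans (sum_le_sum fun k hk => ?_)
  rw [← sub_mul, abs_mul]
  nlinarith [ha k hk t u, abs_nonneg (z k), abs_nonneg (a k t - a k u)]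

lemma abs_le_sup'_grid_add {g : ℝ → ℝ} {K T : ℝ} (hK : 0 ≤ K)
    (hg : ∀ t u, |g t - g u| ≤ K * |t - u|) (hT : 0 < T) {n : ℕ} (hn : 0 < n) {t : ℝ}
    (ht : t ∈ Icc 0 T) :
    |g t| ≤ (range (n + 1)).sup' nonempty_range_add_one (fun i => |g (i * T / n)|)
      + K * (T / n) := by
  have hn' : (0 : ℝ) < n := Nat.cast_pos.2 hn
  set y := t * n / T
  have hy : 0 ≤ y := by have := ht.1; positivity
  have hyn : y ≤ n := by
    rw [div_le_iff₀ hT]; nlinarith [ht.2]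
  set i := ⌊y⌋₊
  have hi : i ∈ range (n + 1) := mem_range.2 (Nat.lt_succ_of_le (Nat.floor_le_of_le hyn))
  have hdist : |t - i * T / n| ≤ T / n := by
    have h₁ : (i : ℝ) ≤ y := Nat.floor_le hy
    have h₂ : y < i + 1 := Nat.lt_floor_add_one y
    have : t - i * T / n = (y - i) * (T / n) := by simp only [y]; field_simp
    rw [this, abs_of_nonneg (by have := sub_nonneg.2 h₁; positivity)]
    nlinarith [div_pos hT hn']
  calc |g t| ≤ |g (i * T / n)| + |g t - g (i * T / n)| := by
        linarith [abs_sub_abs_le_abs_sub (g t) (g (i * T / n))]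
    _ ≤ _ := add_le_add (le_sup' (fun j : ℕ => |g (j * T / n)|) hi)
        ((hg _ _).trans (mul_le_mul_of_nonneg_left hdist hK))

section GaussianSum

variable {Ω : Type*} {mΩ : MeasurableSpace Ω} {μ : Measure Ω} [IsProbabilityMeasure μ]
  {ι : Type*} {Z : ι → Ω → ℝ}

theorem exists_measurable_bound_of_sum_mul_gaussian (hZmeas : ∀ k, Measurable (Z k))
    (hZindep : iIndepFun Z μ) (hZlaw : ∀ k, μ.map (Z k) = gaussianReal 0 1)
    (s : Finset ι) (a : ι → ℝ → ℝ) (ℓ : ι → ℝ) (hℓ : ∀ k ∈ s, 0 ≤ ℓ k)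
    (ha_lip : ∀ k ∈ s, ∀ t u, |a k t - a k u| ≤ ℓ k * |t - u|)
    {v : ℝ≥0} (hv : 0 < v) (ha_sq : ∀ t, ∑ k ∈ s, a k t ^ 2 ≤ v)
    {T : ℝ} (hT : 0 < T) {n : ℕ} (hn : 0 < n) {x : ℝ} (hx : 1 ≤ x)
    (hnx : log (2 * (n + 1)) ≤ x) :
    ∃ h : Ω → ℝ≥0∞, Measurable h ∧
      (∀ ω, ∀ t ∈ Icc 0 T, ENNReal.ofReal |∑ k ∈ s, a k t * Z k ω| ≤ h ω) ∧
      ∫⁻ ω, h ω ∂μ ≤ ENNReal.ofReal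
        (3 * √v * √x + T / n * (∫ y, |y| ∂gaussianReal 0 1) * ∑ k ∈ s, ℓ k) := by
  set G : ℕ → Ω → ℝ := fun i ω => ∑ k ∈ s, a k (i * T / n) * Z k ω
  set Lip : Ω → ℝ := fun ω => ∑ k ∈ s, ℓ k * |Z k ω|
  set sup : Ω → ℝ := fun ω => (range (n + 1)).sup' nonempty_range_add_one fun i => |G i ω|
  have hZint : ∀ k, Integrable (Z k) μ :=
    fun k => (hasSubgaussianMGF_of_map_eq_gaussianReal (hZlaw k)).integrable
  have hGint : ∀ i, Integrable (G i) μ :=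
    fun i => integrable_finsetSum s fun k _ => (hZint k).const_mul _
  have hsup_int : Integrable sup μ := Integrable.finset_sup' _ fun i _ => (hGint i).abs
  have hLip_int : Integrable Lip μ :=
    integrable_finsetSum s fun k _ => (hZint k).abs.const_mul _
  have hLip_nonneg : ∀ ω, 0 ≤ Lip ω := fun ω => sum_nonneg fun k hk => by
    have := hℓ k hk; positivity
  refine ⟨fun ω => ENNReal.ofReal (sup ω + Lip ω * (T / n)), ?_, fun ω t ht => ?_, ?_⟩
  · fun_prop
  · refine ENNReal.ofReal_le_ofReal (abs_le_sup'_grid_add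
      (g := fun t => ∑ k ∈ s, a k t * Z k ω) (hLip_nonneg ω)
      (abs_sum_mul_sub_sum_mul_le s ha_lip (Z · ω)) hT hn ht)
  · have hsup_nonneg : ∀ ω, 0 ≤ sup ω := fun ω =>
      (abs_nonneg _).trans (le_sup' (fun i => |G i ω|) (self_mem_range_succ n))
    have hmax : ∫ ω, sup ω ∂μ ≤ 3 * √v * √x := by
      refine integral_sup'_abs_le_of_hasSubgaussianMGF _ hv (fun i _ =>
        (hasSubgaussianMGF_sum_mul_of_iIndepFun hZindep hZlaw _ s).mono ?_) hx
        (by simpa using hnx)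
      rw [← NNReal.coe_le_coe, NNReal.coe_sum]
      simpa only [Real.coe_toNNReal _ (sq_nonneg _)] using ha_sq _
    have hint : Integrable (fun ω => sup ω + Lip ω * (T / n)) μ :=
      hsup_int.add (hLip_int.mul_const _)
    rw [← ofReal_integral_eq_lintegral_ofReal hint (ae_of_all _ fun ω =>
      add_nonneg (hsup_nonneg ω) (mul_nonneg (hLip_nonneg ω) (by positivity)))]
    refine ENNReal.ofReal_le_ofReal ?_
    rw [integral_add hsup_int (hLip_int.mul_const _), integral_mul_const,
      integral_sum_mul_abs_of_map_eq_gaussianReal hZmeas hZlaw]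
    linarith

end GaussianSum

lemma rpow_neg_add_half_eq_div_sqrt {m : ℝ} (hm : 0 < m) (H : ℝ) :
    m ^ (-(H + 1 / 2)) = m ^ (-H) / √m := by
  rw [neg_add, rpow_add hm, sqrt_eq_rpow, rpow_neg hm.le (1 / 2), ← div_eq_mul_inv]

lemma one_le_four_mul_log {m : ℝ} (hm : 2 ≤ m) : 1 ≤ 4 * log m := by
  linarith [log_two_gt_d9, log_le_log two_pos hm]

lemma log_two_mul_sq_add_one_le {m : ℝ} (hm : 2 ≤ m) : log (2 * (m ^ 2 + 1)) ≤ 4 * log m := by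
  rw [show (4 : ℝ) * log m = log (m ^ 4) by rw [log_pow]; norm_num]
  exact log_le_log (by positivity) (by nlinarith [mul_le_mul hm hm (by norm_num) (by linarith)])

lemma abs_mul_sub_mul_le {T L : ℝ} (hT : 0 < T) {f : ℝ → ℝ}
    (hf : ∀ x y, |f x - f y| ≤ L * |x - y|) (c : ℝ) (k : ℕ) (t u : ℝ) :
    |c * f (k * π * t / T) - c * f (k * π * u / T)| ≤ L * π / T * (|c| * k) * |t - u| := by
  calc |c * f (k * π * t / T) - c * f (k * π * u / T)|
      = |c| * |f (k * π * t / T) - f (k * π * u / T)| := by rw [← mul_sub, abs_mul]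
    _ ≤ |c| * (L * |k * π * t / T - k * π * u / T|) := by gcongr; exact hf _ _
    _ = L * π / T * (|c| * k) * |t - u| := by
      rw [show k * π * t / T - k * π * u / T = k * π / T * (t - u) by ring, abs_mul,
        abs_of_nonneg (show (0 : ℝ) ≤ k * π / T by positivity)]
      ring

section DyadicBlock

variable {H C : ℝ} {lam : ℕ → ℝ} {m : ℕ}

lemma abs_le_of_mem_Ico (hH : 0 ≤ H) (hC : 0 ≤ C)
    (hlam : ∀ k : ℕ, 1 ≤ k → |lam k| ≤ C * (k : ℝ) ^ (-(H + 1 / 2))) (hm : 0 < m)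
    {k : ℕ} (hk : k ∈ Finset.Ico m (2 * m)) : |lam k| ≤ C * ((m : ℝ) ^ (-H) / √m) := by
  have hmk := (Finset.mem_Ico.1 hk).1
  rw [← rpow_neg_add_half_eq_div_sqrt (by positivity)]
  exact (hlam k (by omega)).trans (mul_le_mul_of_nonneg_left
    (rpow_le_rpow_of_nonpos (by positivity) (by exact_mod_cast hmk) (by linarith)) hC)

lemma card_Ico_two_mul (m : ℕ) : (#(Finset.Ico m (2 * m)) : ℝ) = m := by
  rw [Nat.card_Ico, show 2 * m - m = m by omega]

lemma sum_Ico_sq_le (hH : 0 ≤ H) (hC : 0 ≤ C)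
    (hlam : ∀ k : ℕ, 1 ≤ k → |lam k| ≤ C * (k : ℝ) ^ (-(H + 1 / 2))) (hm : 0 < m)
    {M : ℝ} {f : ℕ → ℝ} (hf : ∀ k, |f k| ≤ M) :
    ∑ k ∈ Finset.Ico m (2 * m), (lam k * f k) ^ 2 ≤ (C * M * (m : ℝ) ^ (-H)) ^ 2 := by
  have hm0 : (0 : ℝ) < m := by positivity
  calc ∑ k ∈ Finset.Ico m (2 * m), (lam k * f k) ^ 2
      ≤ ∑ k ∈ Finset.Ico m (2 * m), (C * ((m : ℝ) ^ (-H) / √m) * M) ^ 2 :=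
        sum_le_sum fun k hk => by
          rw [← sq_abs, abs_mul]
          exact pow_le_pow_left₀ (by positivity) (mul_le_mul (abs_le_of_mem_Ico hH hC hlam hm hk)
            (hf k) (abs_nonneg _) (by positivity)) 2
    _ = _ := by
      rw [sum_const, nsmul_eq_mul, card_Ico_two_mul]
      field_simp
      rw [sq_sqrt hm0.le]
      ring

lemma sum_Ico_abs_mul_le (hH : 0 ≤ H) (hC : 0 ≤ C)
    (hlam : ∀ k : ℕ, 1 ≤ k → |lam k| ≤ C * (k : ℝ) ^ (-(H + 1 / 2))) (hm : 0 < m) :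
    ∑ k ∈ Finset.Ico m (2 * m), |lam k| * k ≤ 2 * C * (m : ℝ) ^ (-H) * m * √m := by
  have hm0 : (0 : ℝ) < m := by positivity
  calc ∑ k ∈ Finset.Ico m (2 * m), |lam k| * k
      ≤ #(Finset.Ico m (2 * m)) • (C * ((m : ℝ) ^ (-H) / √m) * (2 * m)) :=
        sum_le_card_nsmul _ _ _ fun k hk => mul_le_mul (abs_le_of_mem_Ico hH hC hlam hm hk)
          (by exact_mod_cast (Finset.mem_Ico.1 hk).2.le) (by positivity) (by positivity)
    _ = _ := by
      rw [nsmul_eq_mul, card_Ico_two_mul]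
      field_simp
      rw [sq_sqrt hm0.le]
      ring

theorem exists_dyadic_block_bound {Ω : Type*} {mΩ : MeasurableSpace Ω} {P : Measure Ω}
    [IsProbabilityMeasure P] {T M L : ℝ} (hT : 0 < T) (hH : 0 ≤ H) (hC : 0 < C)
    (hM : 0 < M) (hL : 0 ≤ L)
    (hlam : ∀ k : ℕ, 1 ≤ k → |lam k| ≤ C * (k : ℝ) ^ (-(H + 1 / 2)))
    {e : ℕ → ℝ → ℝ} (he_bdd : ∀ k x, |e k x| ≤ M)
    (he_lip : ∀ k x y, |e k x - e k y| ≤ L * |x - y|)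
    {Z : ℕ → Ω → ℝ} (hZmeas : ∀ k, Measurable (Z k)) (hZindep : iIndepFun Z P)
    (hZlaw : ∀ k, P.map (Z k) = gaussianReal 0 1) (hm : 2 ≤ m) :
    ∃ h : Ω → ℝ≥0∞, Measurable h ∧
      (∀ ω, ∀ t ∈ Icc 0 T, ENNReal.ofReal
        |∑ k ∈ Finset.Ico m (2 * m), lam k * e k (k * π * t / T) * Z k ω| ≤ h ω) ∧
      ∫⁻ ω, h ω ∂P ≤ ENNReal.ofReal ((6 * C * M + 4 * C * L * π *
        ∫ y, |y| ∂gaussianReal 0 1) * (m : ℝ) ^ (-H) * √(log m)) := by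
  have hm' : (2 : ℝ) ≤ m := by exact_mod_cast hm
  set q := (m : ℝ) ^ (-H)
  set μ₁ := ∫ y, |y| ∂gaussianReal 0 1
  have hμ₁ : 0 ≤ μ₁ := integral_nonneg fun _ => abs_nonneg _
  obtain ⟨h, hmeas, hdom, hint⟩ := exists_measurable_bound_of_sum_mul_gaussian hZmeas hZindep
    hZlaw _ (fun k t => lam k * e k (k * π * t / T)) (fun k => L * π / T * (|lam k| * k))
    (fun k _ => by positivity) (fun k _ => abs_mul_sub_mul_le hT (he_lip k) (lam k) k)
    (v := ((C * M * q) ^ 2).toNNReal) (by positivity)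
    (fun t => by simpa [sq_nonneg] using sum_Ico_sq_le hH hC.le hlam (by omega) (he_bdd · _))
    hT (n := m ^ 2) (by positivity) (one_le_four_mul_log hm')
    (by exact_mod_cast log_two_mul_sq_add_one_le hm')
  refine ⟨h, hmeas, fun ω t ht => ?_, hint.trans (ENNReal.ofReal_le_ofReal ?_)⟩
  · simpa only [mul_assoc] using hdom ω t ht
  have hsqrtx : √(4 * log m) = 2 * √(log m) := by
    rw [sqrt_mul (by norm_num), show (4 : ℝ) = 2 ^ 2 by norm_num, sqrt_sq (by norm_num)]
  have hlog : 1 ≤ 2 * √(log m) := by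
    rw [← hsqrtx]; exact one_le_sqrt.2 (one_le_four_mul_log hm')
  have hsqm : 1 ≤ √(m : ℝ) := one_le_sqrt.2 (by linarith)
  rw [Real.coe_toNNReal _ (sq_nonneg _), sqrt_sq (by positivity), hsqrtx, ← mul_sum]
  push_cast
  calc 3 * (C * M * q) * (2 * √(log m))
        + T / m ^ 2 * μ₁ * (L * π / T * ∑ k ∈ Finset.Ico m (2 * m), |lam k| * k)
      ≤ 3 * (C * M * q) * (2 * √(log m))
        + T / m ^ 2 * μ₁ * (L * π / T * (2 * C * q * m * √m)) := by
        gcongr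
        exact sum_Ico_abs_mul_le hH hC.le hlam (by omega)
    _ = 6 * C * M * q * √(log m) + 2 * C * L * π * μ₁ * (q / √m) := by
        field_simp
        linear_combination (2 * q * μ₁ * L * π) * mul_self_sqrt (Nat.cast_nonneg (α := ℝ) m)
    _ ≤ 6 * C * M * q * √(log m) + 2 * C * L * π * μ₁ * (q * (2 * √(log m))) := by
        gcongr
        calc q / √m ≤ q := div_le_self (by positivity) hsqm
          _ ≤ q * (2 * √(log m)) := le_mul_of_one_le_right (by positivity) hlog
    _ = _ := by ring

end DyadicBlock

lemma ofReal_abs_sub_sum_range_le_tsum_dyadic {u : ℕ → ℝ} {S : ℝ}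
    (hS : Tendsto (fun n => ∑ k ∈ range n, u k) atTop (𝓝 S)) {N : ℕ} (hN : 0 < N) :
    ENNReal.ofReal |S - ∑ k ∈ range N, u k|
      ≤ ∑' j, ENNReal.ofReal |∑ k ∈ Ico (2 ^ j * N) (2 * (2 ^ j * N)), u k| := by
  have hblocks : ∀ J, ∑ k ∈ range (2 ^ J * N), u k - ∑ k ∈ range N, u k
      = ∑ j ∈ range J, ∑ k ∈ Ico (2 ^ j * N) (2 * (2 ^ j * N)), u k := by
    intro J
    induction J with
    | zero => simp
    | succ J ih =>
      rw [sum_range_succ, ← ih, pow_succ, mul_comm _ 2, mul_assoc,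
        ← sum_range_add_sum_Ico _ (Nat.le_mul_of_pos_left _ two_pos)]
      ring
  have hgrow : Tendsto (fun J => 2 ^ J * N) atTop atTop :=
    tendsto_atTop_mono (fun J => (Nat.lt_two_pow_self).le.trans (Nat.le_mul_of_pos_right _ hN))
      tendsto_id
  have hlim : Tendsto (fun J => ENNReal.ofReal
      |∑ k ∈ range (2 ^ J * N), u k - ∑ k ∈ range N, u k|) atTop
      (𝓝 (ENNReal.ofReal |S - ∑ k ∈ range N, u k|)) :=
    (ENNReal.continuous_ofReal.tendsto _).comp ((hS.comp hgrow).sub_const _).abs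
  refine le_of_tendsto' hlim fun J => ?_
  rw [hblocks]
  calc ENNReal.ofReal |∑ j ∈ range J, ∑ k ∈ Ico (2 ^ j * N) (2 * (2 ^ j * N)), u k|
      ≤ ENNReal.ofReal (∑ j ∈ range J, |∑ k ∈ Ico (2 ^ j * N) (2 * (2 ^ j * N)), u k|) :=
        ENNReal.ofReal_le_ofReal (abs_sum_le_sum_abs _ _)
    _ = ∑ j ∈ range J, ENNReal.ofReal |∑ k ∈ Ico (2 ^ j * N) (2 * (2 ^ j * N)), u k| :=
        ENNReal.ofReal_sum_of_nonneg fun j _ => abs_nonneg _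
    _ ≤ _ := ENNReal.sum_le_tsum _

lemma ENNReal.ofReal_iSup_le {ι : Sort*} {f : ι → ℝ} {c : ℝ≥0∞}
    (hf : ∀ i, ENNReal.ofReal (f i) ≤ c) : ENNReal.ofReal (⨆ i, f i) ≤ c := by
  rcases eq_or_ne c ⊤ with rfl | hc
  · exact le_top
  rw [ENNReal.ofReal_le_iff_le_toReal hc]
  exact Real.iSup_le (fun i => (ENNReal.ofReal_le_iff_le_toReal hc).1 (hf i)) ENNReal.toReal_nonneg

lemma MeasureTheory.integral_le_tsum_of_enorm_le_tsum {Ω : Type*} {mΩ : MeasurableSpace Ω}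
    {μ : Measure Ω} {F : Ω → ℝ} {h : ℕ → Ω → ℝ≥0∞}
    (hh : ∀ j, AEMeasurable (h j) μ) (hF : ∀ᵐ ω ∂μ, ‖F ω‖ₑ ≤ ∑' j, h j ω)
    {b : ℕ → ℝ} (hb : ∀ j, 0 ≤ b j) (hb_sum : Summable b)
    (hhb : ∀ j, ∫⁻ ω, h j ω ∂μ ≤ ENNReal.ofReal (b j)) :
    ∫ ω, F ω ∂μ ≤ ∑' j, b j := by
  refine (ENNReal.ofReal_le_ofReal_iff (tsum_nonneg hb)).1 ?_
  calc ENNReal.ofReal (∫ ω, F ω ∂μ) ≤ ‖∫ ω, F ω ∂μ‖ₑ := by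
        rw [Real.enorm_eq_ofReal_abs]; exact ENNReal.ofReal_le_ofReal (le_abs_self _)
    _ ≤ ∫⁻ ω, ‖F ω‖ₑ ∂μ := enorm_integral_le_lintegral_enorm _
    _ ≤ ∫⁻ ω, ∑' j, h j ω ∂μ := lintegral_mono_ae hF
    _ = ∑' j, ∫⁻ ω, h j ω ∂μ := lintegral_tsum hh
    _ ≤ ∑' j, ENNReal.ofReal (b j) := ENNReal.tsum_le_tsum hhb
    _ = ENNReal.ofReal (∑' j, b j) := (ENNReal.ofReal_tsum_of_nonneg hb hb_sum).symm

lemma summable_succ_mul_geometric {r : ℝ} (hr₀ : 0 ≤ r) (hr₁ : r < 1) :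
    Summable fun j : ℕ => ((j : ℝ) + 1) * r ^ j := by
  have h := (summable_pow_mul_geometric_of_norm_lt_one 1
    (by rwa [norm_of_nonneg hr₀])).add (summable_geometric_of_lt_one hr₀ hr₁)
  simpa [add_mul] using h

lemma rpow_neg_mul_sqrt_log_two_pow_mul_le {N : ℝ} (hN : 2 ≤ N) (H : ℝ) (j : ℕ) :
    (2 ^ j * N) ^ (-H) * √(log (2 ^ j * N))
      ≤ N ^ (-H) * √(log N) * ((j + 1) * ((2 : ℝ) ^ (-H)) ^ j) := by
  have hN0 : 0 < N := by linarith
  have hlogN : log 2 ≤ log N := log_le_log two_pos hN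
  have hpow : ((2 : ℝ) ^ j * N) ^ (-H) = ((2 : ℝ) ^ (-H)) ^ j * N ^ (-H) := by
    rw [mul_rpow (by positivity) hN0.le, ← rpow_natCast, ← rpow_natCast,
      ← rpow_mul two_pos.le, ← rpow_mul two_pos.le, mul_comm (j : ℝ), mul_comm]
  have hlog : log (2 ^ j * N) ≤ ((j : ℝ) + 1) ^ 2 * log N := by
    rw [log_mul (by positivity) hN0.ne', log_pow]
    have hj : (0 : ℝ) ≤ j := Nat.cast_nonneg j
    have hlogN0 : 0 ≤ log N := (log_nonneg one_le_two).trans hlogN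
    nlinarith [mul_le_mul_of_nonneg_left hlogN hj, mul_nonneg (mul_nonneg hj hj) hlogN0,
      mul_nonneg hj hlogN0]
  calc (2 ^ j * N) ^ (-H) * √(log (2 ^ j * N))
      ≤ (2 ^ j * N) ^ (-H) * ((j + 1) * √(log N)) := by
        gcongr
        calc √(log (2 ^ j * N)) ≤ √(((j : ℝ) + 1) ^ 2 * log N) := sqrt_le_sqrt hlog
          _ = (j + 1) * √(log N) := by rw [sqrt_mul' _ (by linarith [log_pos one_lt_two]),
            sqrt_sq (by positivity)]
    _ = _ := by rw [hpow]; ring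

theorem expected_sup_of_tail_bound_general
    {Ω : Type*} [MeasurableSpace Ω] (P : Measure Ω) [IsProbabilityMeasure P]
    (T H C M L : ℝ) (hT : 0 < T) (hH : 0 < H) (hC : 0 < C) (hM : 0 < M) (hL : 0 < L)
    (lam : ℕ → ℝ) (hlam : ∀ k : ℕ, 1 ≤ k → |lam k| ≤ C * (k : ℝ) ^ (-(H + 1 / 2)))
    (e : ℕ → ℝ → ℝ)
    (he_bdd : ∀ k x, |e k x| ≤ M)
    (he_lip : ∀ k x y, |e k x - e k y| ≤ L * |x - y|)
    (Z : ℕ → Ω → ℝ) (hZmeas : ∀ k, Measurable (Z k))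
    (hZindep : iIndepFun Z P)
    (hZlaw : ∀ k, P.map (Z k) = gaussianReal 0 1)
    (hconv : ∀ᵐ ω ∂P, TendstoUniformlyOn
        (fun N t => ∑ k ∈ Finset.range (N + 1), lam k * e k (k * π * t / T) * Z k ω)
        (fun t => ∑' k : ℕ, lam k * e k (k * π * t / T) * Z k ω)
        atTop (Set.Icc 0 T)) :
    ∃ A > (0 : ℝ), ∀ N : ℕ, 2 ≤ N →
      (∫ ω, (⨆ t : Set.Icc (0 : ℝ) T,
          |(∑' k : ℕ, lam k * e k (k * π * (t : ℝ) / T) * Z k ω) -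
            ∑ k ∈ Finset.range N, lam k * e k (k * π * (t : ℝ) / T) * Z k ω|) ∂P)
        ≤ A * (N : ℝ) ^ (-H) * Real.sqrt (Real.log N) := by
  set K := 6 * C * M + 4 * C * L * π * ∫ y, |y| ∂gaussianReal 0 1
  have hK : 0 < K := by
    have : 0 ≤ ∫ y, |y| ∂gaussianReal 0 1 := integral_nonneg fun _ => abs_nonneg _
    positivity
  set r := (2 : ℝ) ^ (-H)
  have hr : Summable fun j : ℕ => ((j : ℝ) + 1) * r ^ j :=
    summable_succ_mul_geometric (by positivity)
      (rpow_lt_one_of_one_lt_of_neg one_lt_two (neg_neg_of_pos hH))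
  refine ⟨K * ∑' j : ℕ, ((j : ℝ) + 1) * r ^ j,
    mul_pos hK (hr.tsum_pos (fun _ => by positivity) 0 (by simp)), fun N hN => ?_⟩
  have hN' : (2 : ℝ) ≤ N := by exact_mod_cast hN
  choose h hmeas hdom hint using fun j : ℕ => exists_dyadic_block_bound hT hH.le hC hM hL.le
    hlam he_bdd he_lip hZmeas hZindep hZlaw (m := 2 ^ j * N)
    (hN.trans (Nat.le_mul_of_pos_left N (Nat.two_pow_pos j)))
  calc _ ≤ ∑' j : ℕ, K * N ^ (-H) * √(log N) * ((j + 1) * r ^ j) := by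
        refine integral_le_tsum_of_enorm_le_tsum (fun j => (hmeas j).aemeasurable) ?_
          (fun j => by positivity) (hr.mul_left _)
          fun j => (hint j).trans (ENNReal.ofReal_le_ofReal ?_)
        · filter_upwards [hconv] with ω hω
          rw [enorm_eq_ofReal (Real.iSup_nonneg fun t => abs_nonneg _)]
          refine ENNReal.ofReal_iSup_le fun t => ?_
          exact (ofReal_abs_sub_sum_range_le_tsum_dyadic
            ((tendsto_add_atTop_iff_nat 1).1 (hω.tendsto_at t.2)) (by omega)).trans
              (ENNReal.tsum_le_tsum fun j => hdom j ω t t.2)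
        · push_cast
          rw [mul_assoc]
          exact (mul_le_mul_of_nonneg_left (rpow_neg_mul_sqrt_log_two_pow_mul_le hN' H j)
            hK.le).trans_eq (by ring)
    _ = _ := by rw [tsum_mul_left]; ring

/-- in the setting of the uniformly convergent Gaussian series
`∑_k λ_k e_k(kπt/T) Z_k` (λ_k decaying like `k^(−(H+1/2))`, `e_k` uniformly bounded and
uniformly Lipschitz, `Z_k` i.i.d. standard Gaussians), the expected sup-norm of the tail
starting at `N` is at most `A N^(−H) √(log N)`. -/
theorem expected_sup_of_tail_bound
    {Ω : Type*} [MeasurableSpace Ω] (P : Measure Ω) [IsProbabilityMeasure P]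
    (T H C M L : ℝ) (hT : 0 < T) (hH : 0 < H) (hC : 0 < C) (hM : 0 < M) (hL : 0 < L)
    (lam : ℕ → ℝ) (hlam : ∀ k : ℕ, 1 ≤ k → |lam k| ≤ C * (k : ℝ) ^ (-(H + 1 / 2)))
    (e : ℕ → ℝ → ℝ) (he_cont : ∀ k, Continuous (e k))
    (he_bdd : ∀ k x, |e k x| ≤ M)
    (he_lip : ∀ k x y, |e k x - e k y| ≤ L * |x - y|)
    (Z : ℕ → Ω → ℝ) (hZmeas : ∀ k, Measurable (Z k))
    (hZindep : iIndepFun Z P)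
    (hZlaw : ∀ k, P.map (Z k) = gaussianReal 0 1)
    (hconv : ∀ᵐ ω ∂P, TendstoUniformlyOn
        (fun N t => ∑ k ∈ Finset.range (N + 1), lam k * e k (k * π * t / T) * Z k ω)
        (fun t => ∑' k : ℕ, lam k * e k (k * π * t / T) * Z k ω)
        atTop (Set.Icc 0 T)) :
    ∃ A > (0 : ℝ), ∀ N : ℕ, 2 ≤ N →
      (∫ ω, (⨆ t : Set.Icc (0 : ℝ) T,
          |(∑' k : ℕ, lam k * e k (k * π * (t : ℝ) / T) * Z k ω) -
            ∑ k ∈ Finset.range N, lam k * e k (k * π * (t : ℝ) / T) * Z k ω|) ∂P)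
        ≤ A * (N : ℝ) ^ (-H) * Real.sqrt (Real.log N) :=
  expected_sup_of_tail_bound_general P T H C M L hT hH hC hM hL lam hlam e he_bdd he_lip Z hZmeas
    hZindep hZlaw hconv
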